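/- arXiv:1203.0140 — 3 statements merged into one kernel-verified Lean document; each statement's English description precedes it below -/
import Mathlib

section
/- Let S_λ be a weighted shift on a directed tree T with weights λ = {λ_v}_{v∈V°}, and fix u ∈ V and n ∈ ℕ. Then: (i) e_u ∈ D(S_λⁿ) if and only if Σ_{v ∈ Chi^⟨m⟩(u)} |λ_{u|v}|² < ∞ for all integers m with 1 ≤ m ≤ n; (ii) if e_u ∈ D(S_λⁿ), then S_λⁿ e_u = Σ_{v ∈ Chi^⟨n⟩(u)} λ_{u|v} e_v; (iii) if e_u ∈ D(S_λⁿ), then ‖S_λⁿ e_u‖² = Σ_{v ∈ Chi^⟨n⟩(u)} |λ_{u|v}|². -/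
open Filter
open scoped ENNReal InnerProductSpace ComplexConjugate

attribute [local instance] Classical.propDecidable

noncomputable section

namespace Paper

universe u

/-- A directed tree: a directed graph which is connected (as an undirected graph), has no
(directed) circuits, and in which every vertex has at most one parent. -/
structure DirectedTree (V : Type*) where
  E : V → V → Prop
  connected : ∀ u v : V, Relation.ReflTransGen (fun a b => E a b ∨ E b a) u v
  noCircuits : ∀ v : V, ¬ Relation.TransGen E v v
  par_unique : ∀ ⦃u₁ u₂ v : V⦄, E u₁ v → E u₂ v → u₁ = u₂

namespace DirectedTree

variable {V : Type*} (t : DirectedTree V)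

/-- The set of children of a vertex. -/
def chi (u : V) : Set V := {v | t.E u v}

/-- `v` has a parent, i.e. `v ∈ V°`. -/
def hasPar (v : V) : Prop := ∃ u, t.E u v

/-- The parent partial function, as a total function with junk value `v` at parentless
vertices. -/
noncomputable def par (v : V) : V := if h : t.hasPar v then h.choose else v

/-- Children of a set of vertices. -/
def chiSet (W : Set V) : Set V := {v | ∃ u ∈ W, t.E u v}

/-- `n`-fold children of a set of vertices. -/
def chiIter : ℕ → Set V → Set V
  | 0, W => W
  | n + 1, W => t.chiSet (chiIter n W)

/-- `Chi^⟨n⟩(u)`. -/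
def chin (n : ℕ) (u : V) : Set V := t.chiIter n {u}

/-- The descendants of a vertex. -/
def des (u : V) : Set V := ⋃ n : ℕ, t.chin n u

/-- `λ_{u∣v} = ∏_{j=0}^{n-1} λ_{par^j(v)}` for `v ∈ Chi^⟨n⟩(u)`. -/
noncomputable def wprod (lam : V → ℂ) (n : ℕ) (v : V) : ℂ :=
  ∏ j ∈ Finset.range n, lam (t.par^[j] v)

end DirectedTree

/-- The Hilbert space `ℓ²(V)`. -/
abbrev H2 (V : Type*) := lp (fun _ : V => ℂ) 2

/-- The basis vector `e_u ∈ ℓ²(V)`. -/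
noncomputable def evec {V : Type*} (u : V) : H2 V :=
  haveI := Classical.decEq V
  lp.single 2 u 1

/-- The linear subspace `E = lin{e_u : u ∈ V}`. -/
noncomputable def espan (V : Type*) : Submodule ℂ (H2 V) :=
  Submodule.span ℂ (Set.range (evec : V → H2 V))

/-- The map `Λ_T` on all functions `V → ℂ`:
`(Λ_T f)(v) = λ_v f(par(v))` for `v ∈ V°` and `0` at the root. -/
noncomputable def lamLin {V : Type*} (t : DirectedTree V) (lam : V → ℂ) :
    (V → ℂ) →ₗ[ℂ] (V → ℂ) where
  toFun f := fun v => if t.hasPar v then lam v * f (t.par v) else 0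
  map_add' f g := by
    funext v
    by_cases h : t.hasPar v <;> simp [h, mul_add]
  map_smul' c f := by
    funext v
    by_cases h : t.hasPar v <;> simp [h] <;> ring

/-- The domain `{f ∈ ℓ²(V) : Λ_T f ∈ ℓ²(V)}` of the weighted shift. -/
noncomputable def shiftDom {V : Type*} (t : DirectedTree V) (lam : V → ℂ) :
    Submodule ℂ (H2 V) where
  carrier := {f | Memℓp (lamLin t lam f) 2}
  zero_mem' := by
    simpa only [Set.mem_setOf_eq, lp.coeFn_zero, map_zero] using zero_memℓp
  add_mem' := by
    intro f g hf hg
    simp only [Set.mem_setOf_eq, lp.coeFn_add, map_add] at *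
    exact hf.add hg
  smul_mem' := by
    intro c f hf
    simp only [Set.mem_setOf_eq] at hf ⊢
    rw [lp.coeFn_smul, LinearMap.map_smul]
    exact hf.const_smul c

/-- The weighted shift `S_λ` on the directed tree `T`, as an unbounded operator in `ℓ²(V)`. -/
noncomputable def shift {V : Type*} (t : DirectedTree V) (lam : V → ℂ) :
    H2 V →ₗ.[ℂ] H2 V where
  domain := shiftDom t lam
  toFun :=
    { toFun := fun f => (⟨lamLin t lam f, f.2⟩ : H2 V)
      map_add' := by
        intro f g
        apply lp.ext
        simp only [Submodule.coe_add, lp.coeFn_add, map_add]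
      map_smul' := by
        intro c f
        apply lp.ext
        simp only [SetLike.val_smul, lp.coeFn_smul, LinearMap.map_smul, RingHom.id_apply] }

section Operator

variable {H : Type*} [NormedAddCommGroup H] [InnerProductSpace ℂ H]

/-- `x ∈ D(Tⁿ)`. -/
def iterMem (T : H →ₗ.[ℂ] H) : ℕ → H → Prop
  | 0, _ => True
  | n + 1, x => ∃ h : x ∈ T.domain, iterMem T n (T ⟨x, h⟩)

/-- `Tⁿ x` (junk value `0` if undefined along the way). -/
noncomputable def iterApp (T : H →ₗ.[ℂ] H) : ℕ → H → H
  | 0, x => x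
  | n + 1, x => if h : x ∈ T.domain then iterApp T n (T ⟨x, h⟩) else 0

/-- The inner product in the paper's convention: `⟨x, y⟩` is linear in `x`. -/
noncomputable def pinner (x y : H) : ℂ := inner (𝕜 := ℂ) y x

/-- `E ⊆ D∞(S_λ)` where `E = lin{e_u : u ∈ V}`. -/
def spanDomInfty {V : Type*} (t : DirectedTree V) (lam : V → ℂ) : Prop :=
  ∀ f ∈ espan V, ∀ n : ℕ, iterMem (shift t lam) n f

/-- A linear subspace `F` is a core of `T` if the graph of `T` is contained in the closure of
the graph of `T|_F`. -/
def IsCore (T : H →ₗ.[ℂ] H) (F : Submodule ℂ H) : Prop :=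
  (T.graph : Set (H × H)) ⊆ closure ((T.domRestrict F).graph : Set (H × H))

/-- `f` is a quasi-analytic vector of `T`:
`f ∈ D∞(T)` and `∑_{n ≥ 1} ‖Tⁿ f‖^{-1/n} = ∞` (convention `1/0 = ∞`). -/
def QuasiAnalyticVec (T : H →ₗ.[ℂ] H) (f : H) : Prop :=
  (∀ n : ℕ, iterMem T n f) ∧
    ∑' n : ℕ, (ENNReal.ofReal (‖iterApp T (n + 1) f‖ ^ (1 / (n + 1 : ℝ))))⁻¹ = ∞

end Operator

section NormalSubnormal

/-- A normal operator: closed, densely defined, with `D(N) = D(N*)` and `‖N* h‖ = ‖N h‖` on the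
common domain. -/
structure IsNormalOp {K : Type*} [NormedAddCommGroup K] [InnerProductSpace ℂ K]
    [CompleteSpace K] (N : K →ₗ.[ℂ] K) : Prop where
  dense : Dense (N.domain : Set K)
  isClosed : N.IsClosed
  dom_adjoint : N.adjoint.domain = N.domain
  norm_adjoint : ∀ (x : K) (hx : x ∈ N.domain) (hx' : x ∈ N.adjoint.domain),
    ‖N.adjoint ⟨x, hx'⟩‖ = ‖N ⟨x, hx⟩‖

/-- A normal extension of `S`: a Hilbert space `K`, an isometric linear embedding `J : H → K`,
and a normal operator `N` in `K` with `N (J h) = J (S h)` for all `h ∈ D(S)`. -/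
structure NormalExtension {H : Type u} [NormedAddCommGroup H] [InnerProductSpace ℂ H]
    (S : H →ₗ.[ℂ] H) : Type (u + 1) where
  K : Type u
  [instNG : NormedAddCommGroup K]
  [instIP : InnerProductSpace ℂ K]
  [instCS : CompleteSpace K]
  J : H →ₗᵢ[ℂ] K
  N : K →ₗ.[ℂ] K
  normal : IsNormalOp N
  ext_prop : ∀ x : S.domain, ∃ hx : J x ∈ N.domain, N ⟨J x, hx⟩ = J (S x)

/-- A densely defined operator is subnormal if it has a normal extension. -/
def Subnormal {H : Type u} [NormedAddCommGroup H] [InnerProductSpace ℂ H]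
    (S : H →ₗ.[ℂ] H) : Prop :=
  Dense (S.domain : Set H) ∧ Nonempty (NormalExtension S)

/-- A hyponormal operator: densely defined, `D(S) ⊆ D(S*)` and `‖S* f‖ ≤ ‖S f‖` on `D(S)`. -/
def Hyponormal {H : Type*} [NormedAddCommGroup H] [InnerProductSpace ℂ H] [CompleteSpace H]
    (S : H →ₗ.[ℂ] H) : Prop :=
  Dense (S.domain : Set H) ∧ S.domain ≤ S.adjoint.domain ∧
    ∀ (x : H) (hx : x ∈ S.domain) (hx' : x ∈ S.adjoint.domain),
      ‖S.adjoint ⟨x, hx'⟩‖ ≤ ‖S ⟨x, hx⟩‖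

end NormalSubnormal

section Stieltjes

open MeasureTheory

/-- `μ` is a representing measure of `{t_n}`: a positive Borel measure on `ℝ₊`
with `t_n = ∫_0^∞ sⁿ dμ(s)` for all `n`. -/
def IsRepMeasure (μ : Measure ℝ) (t : ℕ → ℝ) : Prop :=
  μ (Set.Iio 0) = 0 ∧ ∀ n : ℕ, Integrable (fun s => s ^ n) μ ∧ t n = ∫ s, s ^ n ∂μ

/-- `{t_n}` is a Stieltjes moment sequence. -/
def IsStieltjes (t : ℕ → ℝ) : Prop := ∃ μ : Measure ℝ, IsRepMeasure μ t

/-- A Stieltjes moment sequence is determinate if it has only one representing measure. -/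
def Determinate (t : ℕ → ℝ) : Prop :=
  ∀ ⦃μ ν : Measure ℝ⦄, IsRepMeasure μ t → IsRepMeasure ν t → μ = ν

/-- `∫_σ (1/s) dμ(s)`, with the convention `1/0 = ∞`. -/
noncomputable def recipInt (μ : Measure ℝ) (σ : Set ℝ) : ℝ≥0∞ :=
  ∫⁻ s in σ, (ENNReal.ofReal s)⁻¹ ∂μ

/-- The sequence `(θ, t_0, t_1, …)`. -/
def prepend (θ : ℝ) (t : ℕ → ℝ) : ℕ → ℝ
  | 0 => θ
  | n + 1 => t n

/-- `{t_n}` is positive definite. -/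
def PosDefSeq (t : ℕ → ℝ) : Prop :=
  ∀ (n : ℕ) (α : ℕ → ℂ),
    0 ≤ (∑ k ∈ Finset.range (n + 1), ∑ l ∈ Finset.range (n + 1),
      (t (k + l) : ℂ) * α k * (starRingEnd ℂ) (α l)).re

/-- The measure `ν_μ(σ) = ∫_σ (1/s) dμ(s) + (θ − ∫_0^∞ (1/s) dμ(s)) δ₀(σ)`. -/
noncomputable def numap (θ : ℝ) (μ : Measure ℝ) : Measure ℝ :=
  μ.withDensity (fun s => (ENNReal.ofReal s)⁻¹) +
    (ENNReal.ofReal θ - recipInt μ Set.univ) • Measure.dirac (0 : ℝ)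

/-- The measure `μ_ν(σ) = ∫_σ s dν(s)`. -/
noncomputable def mumap (ν : Measure ℝ) : Measure ℝ :=
  ν.withDensity fun s => ENNReal.ofReal s

end Stieltjes

section Consistency

open MeasureTheory

variable {V : Type*}

/-- The consistency condition \eqref{muu+} at the vertex `u`:
`μ_u(σ) = Σ_{v ∈ Chi(u)} |λ_v|² ∫_σ (1/s) dμ_v(s) + ε_u δ₀(σ)`. -/
def Consistent (t : DirectedTree V) (lam : V → ℂ) (μ : V → Measure ℝ) (ε : V → ℝ)
    (u : V) : Prop :=
  ∀ σ : Set ℝ, MeasurableSet σ →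
    μ u σ = (∑' v : t.chi u, ENNReal.ofReal (‖lam (v : V)‖ ^ 2) * recipInt (μ (v : V)) σ)
      + ENNReal.ofReal (ε u) * Measure.dirac (0 : ℝ) σ

/-- The measure `μ_u` from Lemma charsub2, built from the children measures:
`μ_u(σ) = Σ_{v ∈ Chi(u)} |λ_v|² ∫_σ (1/s) dμ_v(s) + ε_u δ₀(σ)` with
`ε_u = 1 − Σ_{v ∈ Chi(u)} |λ_v|² ∫_0^∞ (1/s) dμ_v(s)`. -/
noncomputable def consMeasure (t : DirectedTree V) (lam : V → ℂ) (μ : V → Measure ℝ)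
    (u : V) : Measure ℝ :=
  Measure.sum (fun v : t.chi u =>
      ENNReal.ofReal (‖lam (v : V)‖ ^ 2) •
        (μ (v : V)).withDensity fun s => (ENNReal.ofReal s)⁻¹) +
    (1 - ∑' v : t.chi u, ENNReal.ofReal (‖lam (v : V)‖ ^ 2) * recipInt (μ (v : V)) Set.univ) •
      Measure.dirac (0 : ℝ)

end Consistency

end Paper

open Paper MeasureTheory Filter
open scoped ENNReal

/-!
Because `Λ_T` is defined on all of `ℂ^V`, `f ∈ D(S_λⁿ)` exactly when `Λ_Tᵐ f ∈ ℓ²(V)` for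
`1 ≤ m ≤ n`, and then `S_λⁿ f = Λ_Tⁿ f`. A vertex lies in `Chi^⟨n+1⟩(u)` exactly when it has a
parent lying in `Chi^⟨n⟩(u)`, and `λ_{u|v} = λ_v λ_{u|par(v)}`; hence `Λ_Tⁿ e_u` is the function
supported on `Chi^⟨n⟩(u)` with values `λ_{u|v}`. Its `ℓ²` membership, its expansion in the basis
`{e_v}` and its norm are then read off coordinatewise.
-/

section lpTwo

variable {ι : Type*}

theorem memℓp_two_iff_summable_sq {E : ι → Type*} [∀ i, NormedAddCommGroup (E i)]
    (f : ∀ i, E i) : Memℓp f 2 ↔ Summable fun i => ‖f i‖ ^ 2 := by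
  simp only [memℓp_gen_iff (p := 2) (by norm_num), ENNReal.toReal_ofNat, Real.rpow_two]

theorem lp.norm_sq_eq_tsum {E : ι → Type*} [∀ i, NormedAddCommGroup (E i)]
    (f : lp E 2) : ‖f‖ ^ 2 = ∑' i, ‖f i‖ ^ 2 := by
  simpa only [ENNReal.toReal_ofNat, Real.rpow_two] using
    lp.norm_rpow_eq_tsum (p := 2) (by norm_num) f

theorem norm_sq_indicator_eq_indicator {E : Type*} [NormedAddCommGroup E] (s : Set ι)
    (g : ι → E) : (fun i => ‖s.indicator g i‖ ^ 2) = s.indicator fun i => ‖g i‖ ^ 2 :=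
  (Set.indicator_comp_of_zero (g := fun x : E => ‖x‖ ^ 2) (by simp)).symm

theorem memℓp_indicator_two_iff {E : Type*} [NormedAddCommGroup E] (s : Set ι) (g : ι → E) :
    Memℓp (s.indicator g) 2 ↔ Summable fun i : s => ‖g i‖ ^ 2 := by
  rw [memℓp_two_iff_summable_sq, norm_sq_indicator_eq_indicator, ← summable_subtype_iff_indicator]
  rfl

theorem lp.norm_sq_eq_tsum_subtype {E : Type*} [NormedAddCommGroup E] {s : Set ι} {g : ι → E}
    (f : lp (fun _ : ι => E) 2) (hf : ⇑f = s.indicator g) :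
    ‖f‖ ^ 2 = ∑' i : s, ‖g i‖ ^ 2 := by
  rw [lp.norm_sq_eq_tsum, hf, norm_sq_indicator_eq_indicator]
  exact (tsum_subtype s _).symm

end lpTwo

namespace Paper

variable {V : Type*}

theorem hasSum_smul_evec (f : H2 V) : HasSum (fun v => f v • evec v) f := by
  convert lp.hasSum_single (p := 2) ENNReal.ofNat_ne_top f with v
  rw [evec, ← lp.single_smul, smul_eq_mul, mul_one]

theorem eq_tsum_subtype_smul_evec {s : Set V} {g : V → ℂ} (f : H2 V)
    (hf : ⇑f = s.indicator g) : f = ∑' v : s, g v • evec (v : V) := by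
  rw [tsum_subtype s fun v => g v • evec v, ← (hasSum_smul_evec f).tsum_eq, hf]
  simp only [Set.indicator_smul_apply_left]

namespace DirectedTree

variable (t : DirectedTree V)

theorem par_eq_of_E {w v : V} (h : t.E w v) : t.par v = w := by
  have hv : t.hasPar v := ⟨w, h⟩
  rw [par, dif_pos hv]
  exact t.par_unique hv.choose_spec h

theorem mem_chin_succ_iff {n : ℕ} {u v : V} :
    v ∈ t.chin (n + 1) u ↔ t.hasPar v ∧ t.par v ∈ t.chin n u := by
  constructor
  · rintro ⟨w, hw, hE⟩
    exact ⟨⟨w, hE⟩, by rwa [t.par_eq_of_E hE]⟩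
  · rintro ⟨⟨w, hE⟩, hpar⟩
    rw [t.par_eq_of_E hE] at hpar
    exact ⟨w, hpar, hE⟩

theorem wprod_succ (lam : V → ℂ) (n : ℕ) (v : V) :
    t.wprod lam (n + 1) v = lam v * t.wprod lam n (t.par v) := by
  rw [wprod, wprod, Finset.prod_range_succ', Function.iterate_zero_apply, mul_comm]
  simp only [Function.iterate_succ_apply]

end DirectedTree

section Shift

variable (t : DirectedTree V) (lam : V → ℂ)

theorem lamLin_apply (f : V → ℂ) (v : V) :
    lamLin t lam f v = if t.hasPar v then lam v * f (t.par v) else 0 := rfl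

theorem lamLin_indicator_chin (u : V) (n : ℕ) :
    lamLin t lam ((t.chin n u).indicator (t.wprod lam n)) =
      (t.chin (n + 1) u).indicator (t.wprod lam (n + 1)) := by
  funext v
  by_cases hv : t.hasPar v
  · by_cases hpar : t.par v ∈ t.chin n u
    · have hmem : v ∈ t.chin (n + 1) u := (t.mem_chin_succ_iff).2 ⟨hv, hpar⟩
      rw [lamLin_apply, if_pos hv, Set.indicator_of_mem hpar, Set.indicator_of_mem hmem,
        t.wprod_succ]
    · have hmem : v ∉ t.chin (n + 1) u := fun h => hpar ((t.mem_chin_succ_iff).1 h).2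
      rw [lamLin_apply, if_pos hv, Set.indicator_of_notMem hpar, Set.indicator_of_notMem hmem,
        mul_zero]
  · have hmem : v ∉ t.chin (n + 1) u := fun h => hv ((t.mem_chin_succ_iff).1 h).1
    rw [lamLin_apply, if_neg hv, Set.indicator_of_notMem hmem]

theorem coe_evec_eq_indicator_chin_zero (u : V) :
    ⇑(evec u) = (t.chin 0 u).indicator (t.wprod lam 0) := by
  funext v
  by_cases h : v = u
  · subst h
    simp [evec, DirectedTree.chin, DirectedTree.chiIter, DirectedTree.wprod]
  · simp [evec, DirectedTree.chin, DirectedTree.chiIter, h]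

theorem lamLin_iterate_evec (u : V) (n : ℕ) :
    (lamLin t lam)^[n] (evec u) = (t.chin n u).indicator (t.wprod lam n) := by
  induction n with
  | zero => exact coe_evec_eq_indicator_chin_zero t lam u
  | succ n ih => rw [Function.iterate_succ_apply', ih, lamLin_indicator_chin]

theorem coe_shift_apply (f : (shift t lam).domain) :
    ⇑(shift t lam f) = lamLin t lam f := rfl

theorem iterMem_shift_iff (n : ℕ) (f : H2 V) :
    iterMem (shift t lam) n f ↔ ∀ m : ℕ, 1 ≤ m → m ≤ n → Memℓp ((lamLin t lam)^[m] f) 2 := by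
  induction n generalizing f with
  | zero => exact iff_of_true trivial fun m h1 h2 => absurd (h1.trans h2) (by omega)
  | succ n ih =>
    have hstep : ∀ h : f ∈ (shift t lam).domain, iterMem (shift t lam) n (shift t lam ⟨f, h⟩) ↔
        ∀ m : ℕ, 1 ≤ m → m ≤ n → Memℓp ((lamLin t lam)^[m + 1] f) 2 := fun h => by
      simp only [ih, coe_shift_apply, Function.iterate_succ_apply]
    constructor
    · rintro ⟨hdom, hrest⟩ m h1 h2
      obtain rfl | hm := eq_or_lt_of_le h1
      · exact hdom
      · simpa [Nat.sub_add_cancel h1] using (hstep hdom).1 hrest (m - 1) (by omega) (by omega)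
    · intro H
      have hdom : f ∈ (shift t lam).domain := H 1 le_rfl (by omega)
      exact ⟨hdom, (hstep hdom).2 fun m h1 h2 => H (m + 1) (by omega) (by omega)⟩

theorem coe_iterApp_shift {n : ℕ} {f : H2 V} (hf : iterMem (shift t lam) n f) :
    ⇑(iterApp (shift t lam) n f) = (lamLin t lam)^[n] f := by
  induction n generalizing f with
  | zero => rfl
  | succ n ih =>
    obtain ⟨hdom, hrest⟩ := hf
    rw [iterApp, dif_pos hdom, ih hrest, coe_shift_apply, Function.iterate_succ_apply]

end Shift

end Paper

/-- membership of `e_u` in `D(S_λⁿ)` and the formula for `S_λⁿ e_u`. -/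
theorem stmt1 {V : Type*} (t : Paper.DirectedTree V) (lam : V → ℂ) (u : V) (n : ℕ) :
    (iterMem (shift t lam) n (evec u) ↔
      ∀ m : ℕ, 1 ≤ m → m ≤ n →
        Summable fun v : t.chin m u => ‖t.wprod lam m (v : V)‖ ^ 2) ∧
    (iterMem (shift t lam) n (evec u) →
      iterApp (shift t lam) n (evec u)
        = ∑' v : t.chin n u, t.wprod lam n (v : V) • evec (v : V)) ∧
    (iterMem (shift t lam) n (evec u) →
      ‖iterApp (shift t lam) n (evec u)‖ ^ 2
        = ∑' v : t.chin n u, ‖t.wprod lam n (v : V)‖ ^ 2) := by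
  have hcoe : iterMem (shift t lam) n (evec u) →
      ⇑(iterApp (shift t lam) n (evec u)) = (t.chin n u).indicator (t.wprod lam n) :=
    fun h => (coe_iterApp_shift t lam h).trans (lamLin_iterate_evec t lam u n)
  refine ⟨?_, fun h => eq_tsum_subtype_smul_evec _ (hcoe h),
    fun h => lp.norm_sq_eq_tsum_subtype _ (hcoe h)⟩
  simp only [iterMem_shift_iff, lamLin_iterate_evec, memℓp_indicator_two_iff]
end
end

section
/- Let {t_n}_{n≥0} be a Stieltjes moment sequence, let θ > 0, set t_{-1} = θ, and suppose {t_{n-1}}_{n≥0} is a Stieltjes moment sequence. Let M₀(θ) be the set of representing measures μ of {t_n}_{n≥0} with ∫_0^∞ (1/s) dμ(s) ≤ θ, and let M₋₁(θ) be the set of all representing measures of {t_{n-1}}_{n≥0}. Then the map M₀(θ) ∋ μ ↦ ν_μ ∈ M₋₁(θ), where ν_μ(σ) = ∫_σ (1/s) dμ(s) + (θ − ∫_0^∞ (1/s) dμ(s)) δ₀(σ) for Borel σ ⊆ ℝ₊, is a well-defined bijection whose inverse M₋₁(θ) ∋ ν ↦ μ_ν ∈ M₀(θ) is given by μ_ν(σ)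 = ∫_σ s dν(s). In particular, ν_μ({0}) = 0 if and only if ∫_0^∞ (1/s) dμ(s) = θ. -/
open Filter
open scoped ENNReal InnerProductSpace ComplexConjugate

attribute [local instance] Classical.propDecidable

noncomputable section

open Paper MeasureTheory Filter
open scoped ENNReal

/-! The densities `1/s` and `s` are mutually inverse on `(0, ∞)`. Hence `μ_{ν_μ}` is `μ` restricted
to `(0, ∞)`, which is `μ` itself because `∫ 1/s dμ < ∞` forces `μ{0} = 0`; and `ν_{μ_ν}` is `ν`
restricted to `(0, ∞)` plus an atom at `0` of mass `θ - ν(0, ∞) = ν{0}`, as `ν(ℝ₊) = t_{-1} = θ`.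
Multiplying by `1/s` lowers every moment index by one, and the atom `(θ - ∫ 1/s dμ) δ₀` supplies
exactly the missing moment `t_{-1} = θ`. -/

namespace Paper

lemma ae_nonneg_of_measure_Iio_eq_zero {ρ : Measure ℝ} (h : ρ (Set.Iio 0) = 0) :
    ∀ᵐ s ∂ρ, 0 ≤ s :=
  (measure_eq_zero_iff_ae_notMem.1 h).mono fun _ hs => not_lt.1 hs

lemma isRepMeasure_iff_lintegral {ρ : Measure ℝ} {t : ℕ → ℝ} (h : ρ (Set.Iio 0) = 0) :
    IsRepMeasure ρ t ↔
      ∀ n, 0 ≤ t n ∧ ∫⁻ s, ENNReal.ofReal (s ^ n) ∂ρ = ENNReal.ofReal (t n) := by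
  have hpow : ∀ n, 0 ≤ᵐ[ρ] fun s => s ^ n := fun n =>
    (ae_nonneg_of_measure_Iio_eq_zero h).mono fun s hs => pow_nonneg hs n
  have hmeas : ∀ n, AEStronglyMeasurable (fun s : ℝ => s ^ n) ρ := fun n =>
    (measurable_id.pow_const n).aestronglyMeasurable
  simp only [IsRepMeasure, h, true_and]
  refine forall_congr' fun n => ?_
  rw [integral_eq_lintegral_of_nonneg_ae (hpow n) (hmeas n), Integrable,
    hasFiniteIntegral_iff_ofReal (hpow n)]
  constructor
  · rintro ⟨⟨-, hfin⟩, ht⟩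
    rw [ht]
    exact ⟨ENNReal.toReal_nonneg, (ENNReal.ofReal_toReal hfin.ne).symm⟩
  · rintro ⟨hnn, heq⟩
    rw [heq, ENNReal.toReal_ofReal hnn]
    exact ⟨⟨hmeas n, ENNReal.ofReal_lt_top⟩, rfl⟩

lemma recipInt_univ (μ : Measure ℝ) :
    recipInt μ Set.univ = ∫⁻ s, (ENNReal.ofReal s)⁻¹ ∂μ := by
  rw [recipInt, Measure.restrict_univ]

lemma measure_zero_eq_zero_of_recipInt_ne_top {μ : Measure ℝ} (h : recipInt μ Set.univ ≠ ∞) :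
    μ {0} = 0 := by
  contrapose! h
  refine top_le_iff.1 ((setLIntegral_le_lintegral {0} _).trans_eq' ?_)
  simp [ENNReal.mul_top h]

lemma measurable_inv_ofReal : Measurable fun s : ℝ => (ENNReal.ofReal s)⁻¹ :=
  ENNReal.measurable_ofReal.inv

lemma inv_ofReal_mul_ofReal (s : ℝ) :
    (ENNReal.ofReal s)⁻¹ * ENNReal.ofReal s = (Set.Ioi 0).indicator 1 s := by
  rcases lt_or_ge 0 s with hs | hs
  · rw [Set.indicator_of_mem (Set.mem_Ioi.2 hs), Pi.one_apply,
      ENNReal.inv_mul_cancel (ENNReal.ofReal_pos.2 hs).ne' ENNReal.ofReal_ne_top]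
  · rw [Set.indicator_of_notMem (Set.notMem_Ioi.2 hs), ENNReal.ofReal_of_nonpos hs, mul_zero]

lemma lintegral_numap (θ : ℝ) (μ : Measure ℝ) {f : ℝ → ℝ≥0∞} (hf : Measurable f) :
    ∫⁻ s, f s ∂(numap θ μ) =
      ∫⁻ s, (ENNReal.ofReal s)⁻¹ * f s ∂μ + (ENNReal.ofReal θ - recipInt μ Set.univ) * f 0 := by
  rw [numap, lintegral_add_measure, lintegral_smul_measure, lintegral_dirac' _ hf,
    lintegral_withDensity_eq_lintegral_mul _ measurable_inv_ofReal hf, smul_eq_mul]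
  rfl

lemma lintegral_mumap (ν : Measure ℝ) {f : ℝ → ℝ≥0∞} (hf : Measurable f) :
    ∫⁻ s, f s ∂(mumap ν) = ∫⁻ s, ENNReal.ofReal s * f s ∂ν := by
  rw [mumap, lintegral_withDensity_eq_lintegral_mul _ ENNReal.measurable_ofReal hf]
  rfl

lemma numap_apply_zero (θ : ℝ) {μ : Measure ℝ} (h : μ {0} = 0) :
    numap θ μ {0} = ENNReal.ofReal θ - recipInt μ Set.univ := by
  rw [numap, Measure.add_apply, Measure.smul_apply,
    withDensity_apply _ (measurableSet_singleton 0), Measure.restrict_eq_zero.2 h]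
  simp

lemma mumap_numap (θ : ℝ) (μ : Measure ℝ) : mumap (numap θ μ) = μ.restrict (Set.Ioi 0) := by
  have hdirac : (Measure.dirac (0 : ℝ)).withDensity (fun s => ENNReal.ofReal s) = 0 := by
    rw [dirac_withDensity, ENNReal.ofReal_zero, zero_smul]
  rw [mumap, numap, withDensity_add_measure, withDensity_smul_measure, hdirac, smul_zero,
    add_zero, ← withDensity_mul₀ measurable_inv_ofReal.aemeasurable
      ENNReal.measurable_ofReal.aemeasurable]
  simp only [Pi.mul_def, inv_ofReal_mul_ofReal]
  rw [withDensity_indicator measurableSet_Ioi, withDensity_one]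

lemma withDensity_inv_mumap (ν : Measure ℝ) :
    (mumap ν).withDensity (fun s => (ENNReal.ofReal s)⁻¹) = ν.restrict (Set.Ioi 0) := by
  rw [mumap, ← withDensity_mul₀ ENNReal.measurable_ofReal.aemeasurable
    measurable_inv_ofReal.aemeasurable]
  simp only [Pi.mul_def, mul_comm (ENNReal.ofReal _), inv_ofReal_mul_ofReal]
  rw [withDensity_indicator measurableSet_Ioi, withDensity_one]

lemma recipInt_mumap (ν : Measure ℝ) : recipInt (mumap ν) Set.univ = ν (Set.Ioi 0) := by
  rw [recipInt, ← withDensity_apply _ MeasurableSet.univ, withDensity_inv_mumap,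
    Measure.restrict_apply_univ]

lemma numap_mumap (θ : ℝ) (ν : Measure ℝ) :
    numap θ (mumap ν) =
      ν.restrict (Set.Ioi 0) + (ENNReal.ofReal θ - ν (Set.Ioi 0)) • Measure.dirac 0 := by
  rw [numap, withDensity_inv_mumap, recipInt_mumap]

lemma restrict_Ioi_add_smul_dirac {ν : Measure ℝ} (h : ν (Set.Iio 0) = 0) :
    ν.restrict (Set.Ioi 0) + ν {0} • Measure.dirac 0 = ν := by
  have hIic : Set.Iic (0 : ℝ) =ᵐ[ν] ({0} : Set ℝ) := by
    rw [← Set.Iio_union_right]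
    exact union_ae_eq_right_of_ae_eq_empty (ae_eq_empty.2 h)
  conv_rhs => rw [← Measure.restrict_add_restrict_compl (μ := ν) (measurableSet_Ioi (a := 0))]
  rw [Set.compl_Ioi, Measure.restrict_congr_set hIic, Measure.restrict_singleton]

lemma measure_univ_of_isRepMeasure {ν : Measure ℝ} {t : ℕ → ℝ} (hν : IsRepMeasure ν t) :
    ν Set.univ = ENNReal.ofReal (t 0) := by
  simpa using ((isRepMeasure_iff_lintegral hν.1).1 hν 0).2

lemma ae_pos_of_recipInt_ne_top {μ : Measure ℝ} (h : μ (Set.Iio 0) = 0)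
    (hfin : recipInt μ Set.univ ≠ ∞) : ∀ᵐ s ∂μ, 0 < s := by
  have hIic : μ (Set.Iic 0) = 0 := by
    rw [← Set.Iio_union_right]
    exact measure_union_null h (measure_zero_eq_zero_of_recipInt_ne_top hfin)
  exact (measure_eq_zero_iff_ae_notMem.1 hIic).mono fun _ hs => not_le.1 hs

lemma isRepMeasure_mumap {ν : Measure ℝ} {t : ℕ → ℝ} (hν : IsRepMeasure ν t) :
    IsRepMeasure (mumap ν) (fun n => t (n + 1)) := by
  have h0 : mumap ν (Set.Iio 0) = 0 := by
    rw [mumap, withDensity_apply _ measurableSet_Iio, Measure.restrict_eq_zero.2 hν.1,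
      lintegral_zero_measure]
  have hmom := (isRepMeasure_iff_lintegral hν.1).1 hν
  refine (isRepMeasure_iff_lintegral h0).2 fun n => ⟨(hmom (n + 1)).1, ?_⟩
  rw [lintegral_mumap ν (by fun_prop), ← (hmom (n + 1)).2]
  refine lintegral_congr_ae ((ae_nonneg_of_measure_Iio_eq_zero hν.1).mono fun s hs => ?_)
  dsimp only
  rw [pow_succ', ENNReal.ofReal_mul hs]

lemma isRepMeasure_numap {μ : Measure ℝ} {t : ℕ → ℝ} {θ : ℝ} (hθ : 0 ≤ θ)
    (hμ : IsRepMeasure μ t) (hle : recipInt μ Set.univ ≤ ENNReal.ofReal θ) :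
    IsRepMeasure (numap θ μ) (prepend θ t) := by
  have hpos := ae_pos_of_recipInt_ne_top hμ.1 (ne_top_of_le_ne_top ENNReal.ofReal_ne_top hle)
  have h0 : numap θ μ (Set.Iio 0) = 0 := by
    rw [numap, Measure.add_apply, withDensity_apply _ measurableSet_Iio,
      Measure.restrict_eq_zero.2 hμ.1]
    simp
  have hmom := (isRepMeasure_iff_lintegral hμ.1).1 hμ
  refine (isRepMeasure_iff_lintegral h0).2 ?_
  rintro (_ | n)
  · refine ⟨hθ, ?_⟩
    rw [lintegral_numap θ μ (by fun_prop)]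
    simp only [pow_zero, ENNReal.ofReal_one, mul_one, ← recipInt_univ,
      add_tsub_cancel_of_le hle]
    rfl
  · refine ⟨(hmom n).1, ?_⟩
    rw [lintegral_numap θ μ (by fun_prop)]
    simp only [prepend, ← (hmom n).2, zero_pow n.succ_ne_zero, ENNReal.ofReal_zero, mul_zero,
      add_zero]
    refine lintegral_congr_ae (hpos.mono fun s hs => ?_)
    dsimp only
    rw [pow_succ', ENNReal.ofReal_mul hs.le, ← mul_assoc, inv_ofReal_mul_ofReal,
      Set.indicator_of_mem (Set.mem_Ioi.2 hs), Pi.one_apply, one_mul]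

lemma numap_mumap_of_isRepMeasure {ν : Measure ℝ} {t : ℕ → ℝ} {θ : ℝ}
    (hν : IsRepMeasure ν (prepend θ t)) : numap θ (mumap ν) = ν := by
  have hsplit := restrict_Ioi_add_smul_dirac hν.1
  have hmass : ν Set.univ = ENNReal.ofReal θ := measure_univ_of_isRepMeasure hν
  have huniv : ν (Set.Ioi 0) + ν {0} = ENNReal.ofReal θ := by
    simpa using (congrArg (· Set.univ) hsplit).trans hmass
  have hatom : ENNReal.ofReal θ - ν (Set.Ioi 0) = ν {0} :=
    ENNReal.sub_eq_of_eq_add_rev (ne_top_of_le_ne_top ENNReal.ofReal_ne_top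
      (huniv ▸ le_self_add)) huniv.symm
  rw [numap_mumap, hatom, hsplit]

end Paper

theorem stmt5_general (t : ℕ → ℝ) (θ : ℝ) (hθ : 0 < θ) :
    Set.BijOn (numap θ)
        {μ : Measure ℝ | IsRepMeasure μ t ∧ recipInt μ Set.univ ≤ ENNReal.ofReal θ}
        {ν : Measure ℝ | IsRepMeasure ν (prepend θ t)} ∧
    (∀ μ : Measure ℝ, IsRepMeasure μ t → recipInt μ Set.univ ≤ ENNReal.ofReal θ →
      mumap (numap θ μ) = μ) ∧
    (∀ ν : Measure ℝ, IsRepMeasure ν (prepend θ t) →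
      (IsRepMeasure (mumap ν) t ∧ recipInt (mumap ν) Set.univ ≤ ENNReal.ofReal θ) ∧
        numap θ (mumap ν) = ν) ∧
    (∀ μ : Measure ℝ, IsRepMeasure μ t → recipInt μ Set.univ ≤ ENNReal.ofReal θ →
      (numap θ μ {0} = 0 ↔ recipInt μ Set.univ = ENNReal.ofReal θ)) := by
  have left_inv (μ : Measure ℝ) (hμ : IsRepMeasure μ t)
      (hle : recipInt μ Set.univ ≤ ENNReal.ofReal θ) : mumap (numap θ μ) = μ := by
    rw [mumap_numap]
    exact Measure.restrict_eq_self_of_ae_mem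
      (ae_pos_of_recipInt_ne_top hμ.1 (ne_top_of_le_ne_top ENNReal.ofReal_ne_top hle))
  have mumap_mem (ν : Measure ℝ) (hν : IsRepMeasure ν (prepend θ t)) :
      IsRepMeasure (mumap ν) t ∧ recipInt (mumap ν) Set.univ ≤ ENNReal.ofReal θ := by
    refine ⟨isRepMeasure_mumap hν, ?_⟩
    rw [recipInt_mumap]
    exact (measure_mono (Set.subset_univ _)).trans_eq (measure_univ_of_isRepMeasure hν)
  refine ⟨Set.InvOn.bijOn ⟨fun μ hμ => left_inv μ hμ.1 hμ.2,
      fun ν hν => numap_mumap_of_isRepMeasure hν⟩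
    (fun μ hμ => isRepMeasure_numap hθ.le hμ.1 hμ.2) mumap_mem, left_inv,
    fun ν hν => ⟨mumap_mem ν hν, numap_mumap_of_isRepMeasure hν⟩, fun μ hμ hle => ?_⟩
  rw [numap_apply_zero θ (measure_zero_eq_zero_of_recipInt_ne_top
    (ne_top_of_le_ne_top ENNReal.ofReal_ne_top hle)), tsub_eq_zero_iff_le]
  exact ⟨hle.antisymm, ge_of_eq⟩

/-- the bijection `μ ↦ ν_μ` between `M₀(θ)` and `M₋₁(θ)` with inverse `ν ↦ μ_ν`. -/
theorem stmt5 (t : ℕ → ℝ) (θ : ℝ) (hθ : 0 < θ) (hS : IsStieltjes t)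
    (hS' : IsStieltjes (prepend θ t)) :
    Set.BijOn (numap θ)
        {μ : Measure ℝ | IsRepMeasure μ t ∧ recipInt μ Set.univ ≤ ENNReal.ofReal θ}
        {ν : Measure ℝ | IsRepMeasure ν (prepend θ t)} ∧
    (∀ μ : Measure ℝ, IsRepMeasure μ t → recipInt μ Set.univ ≤ ENNReal.ofReal θ →
      mumap (numap θ μ) = μ) ∧
    (∀ ν : Measure ℝ, IsRepMeasure ν (prepend θ t) →
      (IsRepMeasure (mumap ν) t ∧ recipInt (mumap ν) Set.univ ≤ ENNReal.ofReal θ) ∧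
        numap θ (mumap ν) = ν) ∧
    (∀ μ : Measure ℝ, IsRepMeasure μ t → recipInt μ Set.univ ≤ ENNReal.ofReal θ →
      (numap θ μ {0} = 0 ↔ recipInt μ Set.univ = ENNReal.ofReal θ)) :=
  stmt5_general t θ hθ
end
end

section
/- Let {t_n}_{n≥0} be a Stieltjes moment sequence, let θ > 0, set t_{-1} = θ, and suppose that {t_{n-1}}_{n≥0} is a Stieltjes moment sequence and t_0 > 0. Then t_n > 0 for all n ≥ 0, and for every representing measure μ of {t_n}_{n≥0} with ∫_0^∞ (1/s) dμ(s) ≤ θ one has sup_{n≥0} t_n²/t_{2n+1} ≤ ∫_0^∞ (1/s) dμ(s) ≤ θ. -/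
open Filter
open scoped ENNReal InnerProductSpace ComplexConjugate

attribute [local instance] Classical.propDecidable

noncomputable section

open Paper MeasureTheory Filter
open scoped ENNReal

/-!
The sequence `t` is the shifted moment sequence `t_n = ∫ s^(n+1) dν` of a representing measure `ν`
of `(θ, t_0, t_1, …)`, so every `t_n` is positive exactly when `ν` is not concentrated at `0`,
which `t_0 > 0` guarantees. The estimate is Cauchy–Schwarz for `sⁿ = s^(-1/2) · s^(n+1/2)`:
`t_n² ≤ ∫ s⁻¹ dμ · t_{2n+1}`. Finiteness of `∫ s⁻¹ dμ` forces `μ {0} = 0`, which makes this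
factorisation valid `μ`-almost everywhere.
-/

namespace MeasureTheory

lemma lintegral_sqrt_mul_sq_le {α : Type*} [MeasurableSpace α] (μ : Measure α)
    {f g : α → ℝ≥0∞} (hf : AEMeasurable f μ) (hg : AEMeasurable g μ) :
    (∫⁻ a, (f a * g a) ^ (1 / 2 : ℝ) ∂μ) ^ 2 ≤ (∫⁻ a, f a ∂μ) * ∫⁻ a, g a ∂μ := by
  have hsqrt_sq : ∀ x : ℝ≥0∞, (x ^ (1 / 2 : ℝ)) ^ 2 = x := fun x => by
    rw [← ENNReal.rpow_natCast, ← ENNReal.rpow_mul]; norm_num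
  have hCS := ENNReal.lintegral_mul_le_Lp_mul_Lq μ Real.HolderConjugate.two_two
    (hf.pow_const (1 / 2 : ℝ)) (hg.pow_const (1 / 2 : ℝ))
  simp only [Pi.mul_apply, ← ENNReal.rpow_mul, one_div_mul_cancel (two_ne_zero' ℝ),
    ENNReal.rpow_one] at hCS
  simp_rw [ENNReal.mul_rpow_of_nonneg _ _ (by norm_num : (0 : ℝ) ≤ 1 / 2)]
  calc _ ≤ ((∫⁻ a, f a ∂μ) ^ (1 / 2 : ℝ) * (∫⁻ a, g a ∂μ) ^ (1 / 2 : ℝ)) ^ 2 := by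
        gcongr
    _ = (∫⁻ a, f a ∂μ) * ∫⁻ a, g a ∂μ := by rw [mul_pow, hsqrt_sq, hsqrt_sq]

end MeasureTheory

namespace Paper

variable {μ : Measure ℝ} {t : ℕ → ℝ}

lemma IsRepMeasure.ae_nonneg (h : IsRepMeasure μ t) : ∀ᵐ s ∂μ, 0 ≤ s := by
  simpa [ae_iff, not_le, Set.Iio] using h.1

lemma IsRepMeasure.ofReal_eq_lintegral (h : IsRepMeasure μ t) (n : ℕ) :
    ENNReal.ofReal (t n) = ∫⁻ s, ENNReal.ofReal (s ^ n) ∂μ := by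
  rw [(h.2 n).2]
  exact ofReal_integral_eq_lintegral_ofReal (h.2 n).1
    (h.ae_nonneg.mono fun s hs => pow_nonneg hs n)

lemma IsRepMeasure.moment_pos_iff (h : IsRepMeasure μ t) {k : ℕ} (hk : k ≠ 0) :
    0 < t k ↔ 0 < μ {0}ᶜ := by
  have hsupp : Function.support (fun s : ℝ => s ^ k) = {0}ᶜ := by
    ext s
    simp [pow_ne_zero_iff hk]
  rw [(h.2 k).2, integral_pos_iff_support_of_nonneg_ae
    (h.ae_nonneg.mono fun s hs => pow_nonneg hs k) (h.2 k).1, hsupp]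

lemma pos_of_isStieltjes_prepend {θ : ℝ} (h : IsStieltjes (prepend θ t))
    (ht0 : 0 < t 0) (n : ℕ) : 0 < t n := by
  obtain ⟨ν, hν⟩ := h
  exact (hν.moment_pos_iff n.succ_ne_zero).2 ((hν.moment_pos_iff one_ne_zero).1 ht0)

lemma measure_singleton_zero_eq_zero_of_recipInt_ne_top (h : recipInt μ Set.univ ≠ ∞) :
    μ {0} = 0 := by
  contrapose! h
  refine top_le_iff.1 ?_
  calc ∞ = ∫⁻ s in {0}, (ENNReal.ofReal s)⁻¹ ∂μ := by simp [ENNReal.mul_top h]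
    _ ≤ ∫⁻ s, (ENNReal.ofReal s)⁻¹ ∂μ := setLIntegral_le_lintegral _ _
    _ = recipInt μ Set.univ := by simp [recipInt]

lemma IsRepMeasure.ofReal_sq_le_recipInt_mul (h : IsRepMeasure μ t) (h0 : μ {0} = 0) (n : ℕ) :
    ENNReal.ofReal (t n) ^ 2 ≤ recipInt μ Set.univ * ENNReal.ofReal (t (2 * n + 1)) := by
  have hpos : ∀ᵐ s ∂μ, 0 < s := by
    filter_upwards [h.ae_nonneg, measure_eq_zero_iff_ae_notMem.1 h0] with s hs hs0
    exact hs.lt_of_ne (Ne.symm hs0)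
  have hsqrt : ∀ᵐ s ∂μ,
      ((ENNReal.ofReal s)⁻¹ * ENNReal.ofReal (s ^ (2 * n + 1))) ^ (1 / 2 : ℝ) =
        ENNReal.ofReal (s ^ n) := by
    filter_upwards [hpos] with s hs
    rw [show s ^ (2 * n + 1) = s * (s ^ n) ^ 2 by ring, ENNReal.ofReal_mul hs.le, ← mul_assoc,
      ENNReal.inv_mul_cancel (ENNReal.ofReal_pos.2 hs).ne' ENNReal.ofReal_ne_top, one_mul,
      ENNReal.ofReal_pow (pow_nonneg hs.le n), ← ENNReal.rpow_natCast, ← ENNReal.rpow_mul]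
    norm_num
  rw [h.ofReal_eq_lintegral, h.ofReal_eq_lintegral, ← lintegral_congr_ae hsqrt, recipInt,
    Measure.restrict_univ]
  exact lintegral_sqrt_mul_sq_le μ ENNReal.measurable_ofReal.inv.aemeasurable
    (ENNReal.measurable_ofReal.comp (measurable_id.pow_const _)).aemeasurable

end Paper

theorem stmt7_general (t : ℕ → ℝ) (θ : ℝ) (hS' : IsStieltjes (prepend θ t)) (ht0 : 0 < t 0) :
    (∀ n : ℕ, 0 < t n) ∧
    ∀ μ : Measure ℝ, IsRepMeasure μ t → recipInt μ Set.univ ≤ ENNReal.ofReal θ →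
      (⨆ n : ℕ, ENNReal.ofReal (t n ^ 2 / t (2 * n + 1))) ≤ recipInt μ Set.univ ∧
        recipInt μ Set.univ ≤ ENNReal.ofReal θ := by
  have hpos := pos_of_isStieltjes_prepend hS' ht0
  refine ⟨hpos, fun μ hμ hrec => ⟨iSup_le fun n => ?_, hrec⟩⟩
  have h0 : μ {0} = 0 :=
    measure_singleton_zero_eq_zero_of_recipInt_ne_top (ne_top_of_le_ne_top ENNReal.ofReal_ne_top hrec)
  have hodd := hpos (2 * n + 1)
  rw [ENNReal.ofReal_div_of_pos hodd, ENNReal.ofReal_pow (hpos n).le,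
    ENNReal.div_le_iff (ENNReal.ofReal_pos.2 hodd).ne' ENNReal.ofReal_ne_top]
  exact hμ.ofReal_sq_le_recipInt_mul h0 n

/-- positivity and the estimate `sup_n t_n²/t_{2n+1} ≤ ∫ (1/s) dμ ≤ θ`. -/
theorem stmt7 (t : ℕ → ℝ) (θ : ℝ) (hθ : 0 < θ) (hS : IsStieltjes t)
    (hS' : IsStieltjes (prepend θ t)) (ht0 : 0 < t 0) :
    (∀ n : ℕ, 0 < t n) ∧
    ∀ μ : Measure ℝ, IsRepMeasure μ t → recipInt μ Set.univ ≤ ENNReal.ofReal θ →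
      (⨆ n : ℕ, ENNReal.ofReal (t n ^ 2 / t (2 * n + 1))) ≤ recipInt μ Set.univ ∧
        recipInt μ Set.univ ≤ ENNReal.ofReal θ :=
  stmt7_general t θ hS' ht0
end
end
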